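/- arXiv:1705.08262 — 7 statements merged into one kernel-verified Lean document; each statement's English description precedes it below -/
import Mathlib

section
/- For any trace T of the TSO-LB labelled transition system, the reads-from relation rf is a sub-order of the logical-time order L: whenever a write w rf a read r, w precedes r in L. -/
namespace TSOLB

/-- A TSO-LB state: local buffers per processor and a global buffer. -/
structure State (P A V : Type) where
  loc : P → A → V
  glob : A → V

/-- Actions of TSO-LB.  `read` and `write` are the observable labels
`Read(p,a,v)` / `Write(p,a,v)`; `prop p` is the propagate-to-`p` transition,
whose observable label is the silent label τ. -/
inductive Act (P A V : Type) where
  | read  (p : P) (a : A) (v : V)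
  | write (p : P) (a : A) (v : V)
  | prop  (p : P)

variable {P A V : Type}

/-- The transition relation of the TSO-LB labelled transition system. -/
inductive Step [DecidableEq P] [DecidableEq A] :
    State P A V → Act P A V → State P A V → Prop where
  | read (q : State P A V) (p : P) (a : A) (v : V) (h : q.loc p a = v) :
      Step q (Act.read p a v) q
  | write (q : State P A V) (p : P) (a : A) (v : V) :
      Step q (Act.write p a v)
        ⟨Function.update q.loc p (Function.update (q.loc p) a v),
         Function.update q.glob a v⟩
  | prop (q : State P A V) (p : P) :
      Step q (Act.prop p) ⟨Function.update q.loc p q.glob, q.glob⟩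

/-- Initial states: every local buffer agrees with the global buffer. -/
def Init (q : State P A V) : Prop := ∀ p a, q.loc p a = q.glob a

/-- A path of transitions with its sequence of actions. -/
inductive Path [DecidableEq P] [DecidableEq A] :
    State P A V → List (Act P A V) → State P A V → Prop where
  | nil (q : State P A V) : Path q [] q
  | cons {q q' qf : State P A V} {l : Act P A V} {T : List (Act P A V)} :
      Step q l q' → Path q' T qf → Path q (l :: T) qf

/-- A trace: a sequence of actions arising from a path starting at an initial state. -/
def IsTrace [DecidableEq P] [DecidableEq A] (T : List (Act P A V)) : Prop :=
  ∃ q0 qf : State P A V, Init q0 ∧ Path q0 T qf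

/- Events of a trace are the occurrences in it, identified by their index. -/

/-- Event `i` is a write event. -/
def IsWriteAt (T : List (Act P A V)) (i : ℕ) : Prop :=
  ∃ p a v, T[i]? = some (Act.write p a v)

/-- Event `i` is a read event. -/
def IsReadAt (T : List (Act P A V)) (i : ℕ) : Prop :=
  ∃ p a v, T[i]? = some (Act.read p a v)

/-- Event `i` is a read or write event. -/
def IsRW (T : List (Act P A V)) (i : ℕ) : Prop := IsWriteAt T i ∨ IsReadAt T i

/-- Event `i` is a read or write event of processor `p`. -/
def EvtOf (T : List (Act P A V)) (p : P) (i : ℕ) : Prop :=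
  (∃ a v, T[i]? = some (Act.read p a v)) ∨ (∃ a v, T[i]? = some (Act.write p a v))

/-- Event `i` is a read or write event to address `a`. -/
def EvtAddr (T : List (Act P A V)) (a : A) (i : ℕ) : Prop :=
  (∃ p v, T[i]? = some (Act.read p a v)) ∨ (∃ p v, T[i]? = some (Act.write p a v))

/-- Event `i` is a write to address `a`. -/
def WriteTo (T : List (Act P A V)) (a : A) (i : ℕ) : Prop :=
  ∃ p v, T[i]? = some (Act.write p a v)

/-- Event `k` is a write by `p` to `a` or a propagate to `p`. -/
def Src (T : List (Act P A V)) (p : P) (a : A) (k : ℕ) : Prop :=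
  (∃ v, T[k]? = some (Act.write p a v)) ∨ T[k]? = some (Act.prop p)

/-- `e` is the latest event before position `r` that is a write by `p` to `a`
or a propagate to `p`. -/
def LatestSrcBefore (T : List (Act P A V)) (p : P) (a : A) (e r : ℕ) : Prop :=
  e < r ∧ Src T p a e ∧ ∀ k, e < k → k < r → ¬ Src T p a k

/-- `w` is the latest write to `a` before position `e`. -/
def LatestWriteBefore (T : List (Act P A V)) (a : A) (w e : ℕ) : Prop :=
  w < e ∧ WriteTo T a w ∧ ∀ k, w < k → k < e → ¬ WriteTo T a k

/-- Coherence order: writes to the same address, in trace order. -/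
def co (T : List (Act P A V)) (i j : ℕ) : Prop :=
  i < j ∧ ∃ a, WriteTo T a i ∧ WriteTo T a j

/-- Reads-from: the read at `r` reads its value from the write at `w`, i.e. letting
`e` be the latest event before `r` that is a write by the reader to the read address
or a propagate to the reader, either `w = e`, or `e` is a propagate and `w` is the
latest write to that address before `e`. -/
def ReadsFrom (T : List (Act P A V)) (w r : ℕ) : Prop :=
  ∃ q a v, T[r]? = some (Act.read q a v) ∧ (∃ p, T[w]? = some (Act.write p a v)) ∧
    ∃ e, LatestSrcBefore T q a e r ∧
      (w = e ∨ (T[e]? = some (Act.prop q) ∧ LatestWriteBefore T a w e))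

/-- The reads-from relation `rf`. -/
def rf (T : List (Act P A V)) (w r : ℕ) : Prop := ReadsFrom T w r

/-- Program order: read/write events of the same processor in trace order. -/
def po (T : List (Act P A V)) (i j : ℕ) : Prop :=
  i < j ∧ ∃ p, EvtOf T p i ∧ EvtOf T p j

/-- `po-loc`: program order restricted to pairs of events with the same address. -/
def poloc (T : List (Act P A V)) (i j : ℕ) : Prop :=
  po T i j ∧ ∃ a, EvtAddr T a i ∧ EvtAddr T a j

/-- Preserved program order: `po` minus write-before-read pairs. -/
def ppo (T : List (Act P A V)) (i j : ℕ) : Prop :=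
  po T i j ∧ ¬ (IsWriteAt T i ∧ IsReadAt T j)

/-- From-read: `fr := rf⁻¹ ; co`. -/
def fr (T : List (Act P A V)) (i j : ℕ) : Prop :=
  ∃ w, rf T w i ∧ co T w j

/-- The two events are from distinct processors. -/
def Ext (T : List (Act P A V)) (i j : ℕ) : Prop :=
  ∃ p q, p ≠ q ∧ EvtOf T p i ∧ EvtOf T q j

/-- External reads-from: `rf` restricted to distinct processors. -/
def rfe (T : List (Act P A V)) (i j : ℕ) : Prop := rf T i j ∧ Ext T i j

/-- External from-read: `fr` restricted to distinct processors. -/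
def fre (T : List (Act P A V)) (i j : ℕ) : Prop := fr T i j ∧ Ext T i j

/-- Communication order: `com := co ∪ rf ∪ fr`. -/
def com (T : List (Act P A V)) (i j : ℕ) : Prop :=
  co T i j ∨ rf T i j ∨ fr T i j

/-- Happens-before (TSO, no fences): `hb := ppo ∪ rfe`. -/
def hb (T : List (Act P A V)) (i j : ℕ) : Prop := ppo T i j ∨ rfe T i j

/-- Propagation order (TSO, no fences): `prop := ppo ∪ rfe ∪ fr`. -/
def propRel (T : List (Act P A V)) (i j : ℕ) : Prop :=
  ppo T i j ∨ rfe T i j ∨ fr T i j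

/-- A relation is acyclic iff its transitive closure is irreflexive. -/
def Acyclic {α : Type*} (r : α → α → Prop) : Prop :=
  Irreflexive (Relation.TransGen r)

/-- Strict order on optional positions: `none` (no anchor) comes first. -/
def OLt : Option ℕ → Option ℕ → Prop
  | none, some _ => True
  | some m, some n => m < n
  | _, _ => False

/-- The anchor of a read/write event used to define the logical-time order `L`:
a write is anchored at itself; a read is anchored at the latest earlier event
that is a write by the reader to the read address or a propagate to the reader
(`none` if there is no such event, placing the read at the start of `L`). -/
def AnchorOf (T : List (Act P A V)) (i : ℕ) (o : Option ℕ) : Prop :=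
  (IsWriteAt T i ∧ o = some i) ∨
  (∃ p a v, T[i]? = some (Act.read p a v) ∧
    ((o = none ∧ ∀ k, k < i → ¬ Src T p a k) ∨
     (∃ e, o = some e ∧ LatestSrcBefore T p a e i)))

/-- The logical-time order `L` on read/write events: writes in trace order; each read
placed immediately after its anchor (reads with no anchor at the start); events
placed at the same point ordered by trace order. -/
def L (T : List (Act P A V)) (i j : ℕ) : Prop :=
  ∃ oi oj, AnchorOf T i oi ∧ AnchorOf T j oj ∧
    (OLt oi oj ∨ (oi = oj ∧ i < j))

/-- For any trace `T` of TSO-LB, the reads-from relation `rf` is a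
sub-order of the logical-time order `L`. -/
theorem tsolb_rf_suborder_of_L
    (P A V : Type) [Fintype P] [Fintype A] [Fintype V] [DecidableEq P] [DecidableEq A]
    (T : List (Act P A V)) (hT : IsTrace T) :
    ∀ w r : ℕ, rf T w r → L T w r := by
  rintro w r ⟨q, a, v, hr, ⟨p, hw⟩, e, hls, hcase⟩
  refine ⟨some w, some e, Or.inl ⟨⟨p, a, v, hw⟩, rfl⟩,
    Or.inr ⟨q, a, v, hr, Or.inr ⟨e, rfl, hls⟩⟩, ?_⟩
  rcases hcase with rfl | ⟨_, hlw⟩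
  · exact Or.inr ⟨rfl, hls.1⟩
  · exact Or.inl hlw.1

end TSOLB
end

section
/- For any trace T of the TSO-LB labelled transition system, the from-read relation fr := rf⁻¹ ; co is a sub-order of the logical-time order L: whenever a read r fr a write w, r precedes w in L. -/
namespace TSOLB

variable {P A V : Type}

/-- For any trace `T` of TSO-LB, the from-read relation `fr := rf⁻¹ ; co`
is a sub-order of the logical-time order `L`. -/
theorem tsolb_fr_suborder_of_L
    (P A V : Type) [Fintype P] [Fintype A] [Fintype V] [DecidableEq P] [DecidableEq A]
    (T : List (Act P A V)) (hT : IsTrace T) :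
    ∀ r w : ℕ, fr T r w → L T r w := by
  rintro r w ⟨w', ⟨q, a, v, hr, ⟨p, hw'⟩, e, hlat, hcase⟩, hlt, b, ⟨p1, v1, hw'b⟩, ⟨p2, v2, hwb⟩⟩
  have hab : a = b := by
    rw [hw'] at hw'b
    injection hw'b with h
    injection h
  subst hab
  refine ⟨some e, some w, ?_, ?_, ?_⟩
  · exact Or.inr ⟨q, a, v, hr, Or.inr ⟨e, rfl, hlat⟩⟩
  · exact Or.inl ⟨⟨p2, a, v2, hwb⟩, rfl⟩
  · left
    show e < w
    rcases hcase with rfl | ⟨hprop, hwlt, hwto, hmax⟩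
    · exact hlt
    · by_contra h
      push_neg at h
      rcases lt_or_eq_of_le h with hwe | hwe
      · exact hmax w hlt hwe ⟨p2, v2, hwb⟩
      · rw [hwe, hprop] at hwb
        cases hwb

end TSOLB
end

section
/- For any trace T of the TSO-LB labelled transition system, the relation po-loc (program order restricted to pairs of events with the same address) is a sub-order of the logical-time order L: whenever e po-loc e', e precedes e' in L. -/
namespace TSOLB

variable {P A V : Type}

open Classical in
lemma exists_anchor_aux (T : List (Act P A V)) (p : P) (a : A) :
    ∀ i, (∀ k, k < i → ¬ Src T p a k) ∨ ∃ e, LatestSrcBefore T p a e i := by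
  intro i
  induction i with
  | zero => left; intro k hk; omega
  | succ n ih =>
    by_cases hs : Src T p a n
    · right
      exact ⟨n, Nat.lt_succ_self n, hs, fun k hk hk' => ((by omega : False)).elim⟩
    · rcases ih with h | ⟨e, he1, he2, he3⟩
      · left; intro k hk
        rcases Nat.lt_succ_iff_lt_or_eq.mp hk with h' | rfl
        · exact h k h'
        · exact hs
      · right
        refine ⟨e, by omega, he2, fun k hk hk' => ?_⟩
        rcases Nat.lt_succ_iff_lt_or_eq.mp hk' with h' | rfl
        · exact he3 k hk h'
        · exact hs

/-- The event at `i` is determined by `p` and `a`. -/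
lemma evt_determined (T : List (Act P A V)) (p : P) (a : A) (i : ℕ)
    (hp : EvtOf T p i) (ha : EvtAddr T a i) :
    (∃ v, T[i]? = some (Act.read p a v)) ∨ (∃ v, T[i]? = some (Act.write p a v)) := by
  rcases ha with ⟨p', v', h'⟩ | ⟨p', v', h'⟩ <;> rcases hp with ⟨a', v, h⟩ | ⟨a', v, h⟩ <;>
    rw [h'] at h <;> injection h with h''
  · injection h'' with h1 h2 h3; subst h1; exact Or.inl ⟨v', h'⟩
  · exact absurd h'' (by simp)
  · exact absurd h'' (by simp)
  · injection h'' with h1 h2 h3; subst h1; exact Or.inr ⟨v', h'⟩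

/-- For any trace `T` of TSO-LB, the relation `po-loc` (program order
restricted to pairs of events with the same address) is a sub-order of the
logical-time order `L`. -/
theorem tsolb_poloc_suborder_of_L
    (P A V : Type) [Fintype P] [Fintype A] [Fintype V] [DecidableEq P] [DecidableEq A]
    (T : List (Act P A V)) (hT : IsTrace T) :
    ∀ i j : ℕ, poloc T i j → L T i j := by
  intro i j ⟨⟨hij, p, hpi, hpj⟩, a, hai, haj⟩
  rcases evt_determined T p a i hpi hai with ⟨v, hi⟩ | ⟨v, hi⟩ <;>
    rcases evt_determined T p a j hpj haj with ⟨v', hj⟩ | ⟨v', hj⟩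
  · -- read, read
    rcases exists_anchor_aux T p a i with hno | ⟨e, he1, he2, he3⟩
    · rcases exists_anchor_aux T p a j with hno' | ⟨e', he'⟩
      · exact ⟨none, none, Or.inr ⟨p, a, v, hi, Or.inl ⟨rfl, hno⟩⟩,
          Or.inr ⟨p, a, v', hj, Or.inl ⟨rfl, hno'⟩⟩, Or.inr ⟨rfl, hij⟩⟩
      · exact ⟨none, some e', Or.inr ⟨p, a, v, hi, Or.inl ⟨rfl, hno⟩⟩,
          Or.inr ⟨p, a, v', hj, Or.inr ⟨e', rfl, he'⟩⟩, Or.inl trivial⟩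
    · rcases exists_anchor_aux T p a j with hno' | ⟨e', he'1, he'2, he'3⟩
      · exact absurd he2 (hno' e (by omega))
      · refine ⟨some e, some e', Or.inr ⟨p, a, v, hi, Or.inr ⟨e, rfl, he1, he2, he3⟩⟩,
          Or.inr ⟨p, a, v', hj, Or.inr ⟨e', rfl, he'1, he'2, he'3⟩⟩, ?_⟩
        rcases lt_trichotomy e e' with h | h | h
        · exact Or.inl h
        · exact Or.inr ⟨by rw [h], hij⟩
        · exact absurd he2 (he'3 e h (by omega))
  · -- read, write
    rcases exists_anchor_aux T p a i with hno | ⟨e, he1, he2, he3⟩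
    · exact ⟨none, some j, Or.inr ⟨p, a, v, hi, Or.inl ⟨rfl, hno⟩⟩,
        Or.inl ⟨⟨p, a, v', hj⟩, rfl⟩, Or.inl trivial⟩
    · exact ⟨some e, some j, Or.inr ⟨p, a, v, hi, Or.inr ⟨e, rfl, he1, he2, he3⟩⟩,
        Or.inl ⟨⟨p, a, v', hj⟩, rfl⟩, Or.inl (show e < j by omega)⟩
  · -- write, read
    have hsrc : Src T p a i := Or.inl ⟨v, hi⟩
    rcases exists_anchor_aux T p a j with hno | ⟨e, he1, he2, he3⟩
    · exact absurd hsrc (hno i hij)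
    · have hie : i ≤ e := by
        by_contra h
        exact he3 i (by omega) hij hsrc
      refine ⟨some i, some e, Or.inl ⟨⟨p, a, v, hi⟩, rfl⟩,
        Or.inr ⟨p, a, v', hj, Or.inr ⟨e, rfl, he1, he2, he3⟩⟩, ?_⟩
      rcases lt_or_eq_of_le hie with h | h
      · exact Or.inl h
      · exact Or.inr ⟨by rw [h], hij⟩
  · -- write, write
    exact ⟨some i, some j, Or.inl ⟨⟨p, a, v, hi⟩, rfl⟩,
      Or.inl ⟨⟨p, a, v', hj⟩, rfl⟩, Or.inl hij⟩

end TSOLB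
end

section
/- For any trace of the TSO-LB labelled transition system, the NO THIN AIR axiom holds: the happens-before relation hb := ppo ∪ rfe on the read and write events of the trace is acyclic. -/
namespace TSOLB

variable {P A V : Type}

/-- For any trace of TSO-LB, the NO THIN AIR axiom holds:
the happens-before relation `hb := ppo ∪ rfe` is acyclic. -/
theorem tsolb_no_thin_air
    (P A V : Type) [Fintype P] [Fintype A] [Fintype V] [DecidableEq P] [DecidableEq A]
    (T : List (Act P A V)) (hT : IsTrace T) :
    Acyclic (hb T) := by
  have hlt : ∀ i j, hb T i j → i < j := by
    rintro i j (⟨⟨hij, _⟩, _⟩ | ⟨⟨q, a, v, _, _, e, ⟨helt, _, _⟩, hw⟩, _⟩)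
    · exact hij
    · rcases hw with rfl | ⟨_, hlw, _, _⟩
      · exact helt
      · exact hlw.trans helt
  intro i hi
  have key : ∀ j, Relation.TransGen (hb T) i j → i < j := by
    intro j h
    induction h with
    | single h => exact hlt _ _ h
    | tail _ h ih => exact ih.trans (hlt _ _ h)
  exact Nat.lt_irrefl i (key i hi)

end TSOLB
end

section
/- For any trace of the TSO-LB labelled transition system, the OBSERVATION axiom holds: the relation fre ; prop ; hb* on the read and write events of the trace is irreflexive. -/
namespace TSOLB

variable {P A V : Type}

/-!
Stamp every event with the moment its effect is fixed in memory: a write at its own position,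
a read at the last propagate to its processor before it (`⊥` if there is none), since that
propagate is the last time the reader synchronised with global memory. Ordered
lexicographically by (stamp, position), the events strictly increase along every `ppo`, `rfe`
and `fr` edge, so no path along `fre ; prop ; hb*` returns to its start.
-/

section Stamp

open Classical

noncomputable def stamp (T : List (Act P A V)) (i : ℕ) : WithBot ℕ :=
  match T[i]? with
  | some (.write ..) => i
  | some (.read q _ _) => ((Finset.range i).filter fun k => T[k]? = some (.prop q)).max
  | _ => ⊥

variable {T : List (Act P A V)} {i j e : ℕ} {p q : P} {a : A} {v : V}

lemma stamp_of_write (h : T[i]? = some (.write p a v)) : stamp T i = i := by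
  simp only [stamp, h]

lemma stamp_of_read_lt (h : T[i]? = some (.read q a v)) : stamp T i < i := by
  simp only [stamp, h, Finset.max_eq_sup_withBot]
  refine (Finset.sup_lt_iff (WithBot.bot_lt_coe i)).2 fun k hk => ?_
  exact WithBot.coe_lt_coe.2 (Finset.mem_range.1 (Finset.mem_filter.1 hk).1)

lemma le_stamp_of_prop (h : T[j]? = some (.read q a v)) (hij : i < j)
    (hi : T[i]? = some (.prop q)) : (i : WithBot ℕ) ≤ stamp T j := by
  simp only [stamp, h]
  exact Finset.le_max (Finset.mem_filter.2 ⟨Finset.mem_range.2 hij, hi⟩)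

lemma stamp_le_of_latestSrcBefore (h : T[j]? = some (.read q a v))
    (he : LatestSrcBefore T q a e j) : stamp T j ≤ e := by
  simp only [stamp, h]
  refine Finset.max_le fun k hk => WithBot.coe_le_coe.2 ?_
  obtain ⟨hkj, hk⟩ := Finset.mem_filter.1 hk
  by_contra! hek
  exact he.2.2 k hek (Finset.mem_range.1 hkj) (Or.inr hk)

lemma stamp_mono_of_read {a' : A} {v' : V} (hi : T[i]? = some (.read q a v))
    (hj : T[j]? = some (.read q a' v')) (hij : i ≤ j) : stamp T i ≤ stamp T j := by
  simp only [stamp, hi, hj]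
  exact Finset.max_mono (Finset.filter_subset_filter _ (Finset.range_subset_range.2 hij))

end Stamp

section Edges

variable {T : List (Act P A V)} {i j : ℕ}

noncomputable def key (T : List (Act P A V)) (i : ℕ) : WithBot ℕ ×ₗ ℕ := toLex (stamp T i, i)

lemma key_lt_of_stamp_le (hs : stamp T i ≤ stamp T j) (hij : i < j) : key T i < key T j :=
  Prod.Lex.toLex_lt_toLex'.2 ⟨hs, fun _ => hij⟩

lemma key_lt_of_stamp_lt (hs : stamp T i < stamp T j) : key T i < key T j :=
  Prod.Lex.toLex_lt_toLex.2 (Or.inl hs)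

lemma EvtOf.eq_of_write {p p' : P} {a : A} {v : V} (h : EvtOf T p i)
    (hw : T[i]? = some (.write p' a v)) : p = p' := by
  rcases h with ⟨_, _, h⟩ | ⟨_, _, h⟩ <;> simp_all

lemma EvtOf.eq_of_read {p p' : P} {a : A} {v : V} (h : EvtOf T p i)
    (hr : T[i]? = some (.read p' a v)) : p = p' := by
  rcases h with ⟨_, _, h⟩ | ⟨_, _, h⟩ <;> simp_all

lemma stamp_le_of_ppo (h : ppo T i j) : stamp T i ≤ stamp T j := by
  obtain ⟨⟨hij, p, hi, hj⟩, hWR⟩ := h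
  rcases hi with ⟨a, v, hri⟩ | ⟨a, v, hwi⟩ <;> rcases hj with ⟨a', v', hrj⟩ | ⟨a', v', hwj⟩
  · exact stamp_mono_of_read hri hrj hij.le
  · rw [stamp_of_write hwj]
    exact (stamp_of_read_lt hri).le.trans (WithBot.coe_le_coe.2 hij.le)
  · exact absurd ⟨⟨p, a, v, hwi⟩, ⟨p, a', v', hrj⟩⟩ hWR
  · rw [stamp_of_write hwi, stamp_of_write hwj]
    exact WithBot.coe_le_coe.2 hij.le

lemma key_lt_of_ppo (h : ppo T i j) : key T i < key T j :=
  key_lt_of_stamp_le (stamp_le_of_ppo h) h.1.1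

/-- An external write can only reach the reader through a propagate after it. -/
lemma key_lt_of_rfe (h : rfe T i j) : key T i < key T j := by
  obtain ⟨⟨q, a, v, hr, ⟨p, hw⟩, e, he, hsrc⟩, p', q', hpq, hi, hj⟩ := h
  obtain rfl := hi.eq_of_write hw
  obtain rfl := hj.eq_of_read hr
  rcases hsrc with rfl | ⟨hprop, hie, -⟩
  · rcases he.2.1 with ⟨v', hv⟩ | hv <;> rw [hw] at hv <;> simp only [Option.some.injEq,
      Act.write.injEq, reduceCtorEq] at hv
    exact (hpq hv.1).elim
  · apply key_lt_of_stamp_lt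
    calc stamp T i = i := stamp_of_write hw
      _ < e := WithBot.coe_lt_coe.2 hie
      _ ≤ stamp T j := le_stamp_of_prop hr he.1 hprop

lemma key_lt_of_fr (h : fr T i j) : key T i < key T j := by
  obtain ⟨w, ⟨q, a, v, hr, ⟨p, hw⟩, e, he, hsrc⟩, hwj, a', ⟨p₁, v₁, hw₁⟩, ⟨p₂, v₂, hj⟩⟩ := h
  obtain rfl : a' = a := by simp_all
  -- `w` is `e` itself or the last write to `a` before `e`, and `j` is a later write to `a`.
  have hej : e < j := by
    rcases hsrc with rfl | ⟨hprop, -, -, hlast⟩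
    · exact hwj
    · rcases lt_trichotomy j e with hje | rfl | hej
      · exact absurd ⟨p₂, v₂, hj⟩ (hlast j hwj hje)
      · simp_all
      · exact hej
  apply key_lt_of_stamp_lt
  calc stamp T i ≤ e := stamp_le_of_latestSrcBefore hr he
    _ < j := WithBot.coe_lt_coe.2 hej
    _ = stamp T j := (stamp_of_write hj).symm

lemma key_lt_of_propRel (h : propRel T i j) : key T i < key T j := by
  rcases h with h | h | h
  exacts [key_lt_of_ppo h, key_lt_of_rfe h, key_lt_of_fr h]

lemma key_lt_of_hb (h : hb T i j) : key T i < key T j := by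
  rcases h with h | h
  exacts [key_lt_of_ppo h, key_lt_of_rfe h]

lemma key_le_of_reflTransGen_hb (h : Relation.ReflTransGen (hb T) i j) : key T i ≤ key T j := by
  induction h with
  | refl => exact le_rfl
  | tail _ hjk ih => exact ih.trans (key_lt_of_hb hjk).le

end Edges

theorem tsolb_observation_general
    (P A V : Type)
    (T : List (Act P A V)) :
    Irreflexive
      (Relation.Comp (fre T)
        (Relation.Comp (propRel T) (Relation.ReflTransGen (hb T)))) := by
  rintro i ⟨j, ⟨hij, -⟩, k, hjk, hki⟩
  exact lt_irrefl _ <|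
    (key_lt_of_fr hij).trans ((key_lt_of_propRel hjk).trans_le (key_le_of_reflTransGen_hb hki))

/-- For any trace of TSO-LB, the OBSERVATION axiom holds:
the relation `fre ; prop ; hb*` is irreflexive. -/
theorem tsolb_observation
    (P A V : Type) [Fintype P] [Fintype A] [Fintype V] [DecidableEq P] [DecidableEq A]
    (T : List (Act P A V)) (hT : IsTrace T) :
    Irreflexive
      (Relation.Comp (fre T)
        (Relation.Comp (propRel T) (Relation.ReflTransGen (hb T)))) :=
  tsolb_observation_general P A V T

end TSOLB
end

section
/- For any trace of the TSO-LB labelled transition system, the PROPAGATION axiom holds: the relation co ∪ prop on the read and write events of the trace is acyclic. -/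
namespace TSOLB

variable {P A V : Type}

/-! ### Auxiliary machinery for the proof -/

/-- Boolean test: is this (optional) action a propagate to `p`? -/
def isPropTo [DecidableEq P] (p : P) : Option (Act P A V) → Bool
  | some (Act.prop q) => decide (p = q)
  | _ => false

lemma isPropTo_iff [DecidableEq P] (p : P) (o : Option (Act P A V)) :
    isPropTo p o = true ↔ o = some (Act.prop p) := by
  rcases o with _ | a
  · simp [isPropTo]
  · cases a <;> simp [isPropTo, eq_comm]

/-- `pa T p r` is (1 + the position of the latest propagate to `p` strictly
before `r`), or `0` if there is none. -/
def pa [DecidableEq P] (T : List (Act P A V)) (p : P) (r : ℕ) : ℕ :=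
  ((Finset.range r).filter (fun k => isPropTo p T[k]?)).sup (· + 1)

lemma pa_mono [DecidableEq P] (T : List (Act P A V)) (p : P) {i j : ℕ} (h : i ≤ j) :
    pa T p i ≤ pa T p j := by
  apply Finset.sup_mono
  exact Finset.filter_subset_filter _ (Finset.range_subset_range.mpr h)

lemma pa_le [DecidableEq P] (T : List (Act P A V)) (p : P) (r : ℕ) :
    pa T p r ≤ r := by
  apply Finset.sup_le
  intro k hk
  have := (Finset.mem_filter.mp hk).1
  rw [Finset.mem_range] at this
  omega

lemma le_pa [DecidableEq P] (T : List (Act P A V)) (p : P) {e r : ℕ}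
    (her : e < r) (he : T[e]? = some (Act.prop p)) : e + 1 ≤ pa T p r := by
  apply Finset.le_sup (f := (· + 1))
  rw [Finset.mem_filter, Finset.mem_range]
  exact ⟨her, (isPropTo_iff p _).mpr he⟩

lemma exists_of_lt_pa [DecidableEq P] (T : List (Act P A V)) (p : P) {n r : ℕ}
    (h : n < pa T p r) : ∃ k, n ≤ k ∧ k < r ∧ T[k]? = some (Act.prop p) := by
  rw [pa, Finset.lt_sup_iff] at h
  obtain ⟨k, hk, hlt⟩ := h
  rw [Finset.mem_filter, Finset.mem_range] at hk
  exact ⟨k, by omega, hk.1, (isPropTo_iff p _).mp hk.2⟩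

/-- The measure: a write at `i` is timed `(i+1, i)`; a read by `p` at `i` is timed
`(pa T p i, i)`. -/
def mu [DecidableEq P] (T : List (Act P A V)) (i : ℕ) : ℕ × ℕ :=
  match T[i]? with
  | some (Act.write _ _ _) => (i + 1, i)
  | some (Act.read p _ _) => (pa T p i, i)
  | _ => (0, i)

lemma mu_write [DecidableEq P] {T : List (Act P A V)} {i : ℕ} {p : P} {a : A} {v : V}
    (h : T[i]? = some (Act.write p a v)) : mu T i = (i + 1, i) := by
  simp [mu, h]

lemma mu_read [DecidableEq P] {T : List (Act P A V)} {i : ℕ} {p : P} {a : A} {v : V}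
    (h : T[i]? = some (Act.read p a v)) : mu T i = (pa T p i, i) := by
  simp [mu, h]

/-- The strict lexicographic order on `ℕ × ℕ`. -/
def SLex (x y : ℕ × ℕ) : Prop := x.1 < y.1 ∨ (x.1 = y.1 ∧ x.2 < y.2)

lemma SLex.trans {x y z : ℕ × ℕ} (h1 : SLex x y) (h2 : SLex y z) : SLex x z := by
  rcases h1 with h1 | ⟨h1, h1'⟩ <;> rcases h2 with h2 | ⟨h2, h2'⟩ <;>
    unfold SLex <;> omega

lemma SLex.irrefl (x : ℕ × ℕ) : ¬ SLex x x := by unfold SLex; omega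

/-- Every edge of `co ∪ prop` strictly increases the measure `mu`. -/
lemma mu_step [DecidableEq P] [DecidableEq A] (T : List (Act P A V)) (i j : ℕ)
    (h : co T i j ∨ propRel T i j) : SLex (mu T i) (mu T j) := by
  rcases h with hco | hppo | hrfe | hfr
  · -- co: two writes to the same address, i < j
    obtain ⟨hij, a, ⟨p, v, hi⟩, ⟨q, w, hj⟩⟩ := hco
    rw [mu_write hi, mu_write hj]
    exact Or.inl (by omega)
  · -- ppo
    obtain ⟨⟨hij, p, hpi, hpj⟩, hnw⟩ := hppo
    rcases hpi with ⟨a, v, hi⟩ | ⟨a, v, hi⟩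
    · rcases hpj with ⟨b, w, hj⟩ | ⟨b, w, hj⟩
      · -- read, read: pa is monotone along program order
        rw [mu_read hi, mu_read hj]
        rcases lt_or_eq_of_le (pa_mono T p (le_of_lt hij)) with h | h
        · exact Or.inl h
        · exact Or.inr ⟨h, hij⟩
      · -- read, write
        rw [mu_read hi, mu_write hj]
        exact Or.inl (by have := pa_le T p i; omega)
    · rcases hpj with ⟨b, w, hj⟩ | ⟨b, w, hj⟩
      · -- write, read: excluded from ppo
        exact absurd ⟨⟨p, a, v, hi⟩, ⟨p, b, w, hj⟩⟩ hnw
      · -- write, write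
        rw [mu_write hi, mu_write hj]
        exact Or.inl (by omega)
  · -- rfe: i is the write, j the read, via an external source
    obtain ⟨⟨q, a, v, hr, ⟨p', hw⟩, e, ⟨her, hsrc, _⟩, hcase⟩, hext⟩ := hrfe
    rw [mu_write hw, mu_read hr]
    refine Or.inl ?_
    rcases hcase with rfl | ⟨hprop, hwe, _, _⟩
    · -- w = e: then e is a write by the reader, contradicting externality
      exfalso
      rcases hsrc with ⟨v', hv'⟩ | hp
      · rw [hw] at hv'
        simp only [Option.some.injEq, Act.write.injEq] at hv'
        obtain ⟨pq, qp, hp0⟩ := hext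
        rcases hp0.2.1 with ⟨a0, v0, h0⟩ | ⟨a0, v0, h0⟩
        · rw [hw] at h0; simp at h0
        · rw [hw] at h0
          simp only [Option.some.injEq, Act.write.injEq] at h0
          rcases hp0.2.2 with ⟨a1, v1, h1⟩ | ⟨a1, v1, h1⟩
          · rw [hr] at h1
            simp only [Option.some.injEq, Act.read.injEq] at h1
            exact hp0.1 (by rw [← h0.1, ← h1.1]; exact hv'.1)
          · rw [hr] at h1; simp at h1
      · rw [hw] at hp; simp at hp
    · -- e is a propagate to the reader after the write
      have h1 : e + 1 ≤ pa T q j := le_pa T q her hprop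
      omega
  · -- fr: i reads from w, j is a later (than w) write to the same address
    obtain ⟨w, ⟨q, a, v, hi, ⟨p', hw⟩, e, ⟨hei, hsrc, hlat⟩, hcase⟩, hwj, b, hbw, hbj⟩ := hfr
    obtain ⟨pw, vw, hw'⟩ := hbw
    rw [hw] at hw'
    simp only [Option.some.injEq, Act.write.injEq] at hw'
    obtain ⟨pj, vj, hj⟩ := hbj
    rw [← hw'.2.1] at hj
    rw [mu_read hi, mu_write hj]
    -- it suffices that pa T q i ≤ j
    have hle : pa T q i ≤ j := by
      by_contra hgt
      push_neg at hgt
      obtain ⟨k, hjk, hki, hk⟩ := exists_of_lt_pa T q hgt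
      -- k is a Src for (q, a) before i, so k ≤ e
      have hke : k ≤ e := by
        by_contra hek
        push_neg at hek
        exact hlat k hek hki (Or.inr hk)
      rcases hcase with rfl | ⟨hprop, hwe, _, hnow⟩
      · -- w = e: but then k ≤ w < j ≤ k
        rcases eq_or_lt_of_le hke with rfl | hlt
        · rw [hw] at hk; simp at hk
        · omega
      · -- e is a propagate, w the latest write to a before e; j contradicts latestness
        have hje : j < e := by
          rcases eq_or_lt_of_le (le_trans hjk hke) with rfl | h
          · rw [hj] at hprop; simp at hprop
          · exact h
        exact hnow j hwj hje ⟨pj, vj, hj⟩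
    exact Or.inl (by omega)

/-- For any trace of TSO-LB, the PROPAGATION axiom holds:
the relation `co ∪ prop` is acyclic. -/
theorem tsolb_propagation
    (P A V : Type) [Fintype P] [Fintype A] [Fintype V] [DecidableEq P] [DecidableEq A]
    (T : List (Act P A V)) (hT : IsTrace T) :
    Acyclic (fun i j => co T i j ∨ propRel T i j) := by
  intro i hi
  have key : ∀ a b, Relation.TransGen (fun i j => co T i j ∨ propRel T i j) a b →
      SLex (mu T a) (mu T b) := by
    intro a b h
    induction h with
    | single h => exact mu_step T _ _ h
    | tail _ h2 ih => exact ih.trans (mu_step T _ _ h2)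
  exact SLex.irrefl _ (key i i hi)

end TSOLB
end

section
/- Local buffer invariant of TSO-LB: for any path of transitions from an initial state q0 to a state q with trace T, any processor p and address a, consider the latest event e in T that is either a write by p to a or a propagate to p. If no such event exists, then local_q(p)(a) = global_{q0}(a). If e = Write(p,a,v), then local_q(p)(a) = v. If e is a propagate to p, then local_q(p)(a) equals the value of the latest Write(·,a,·) event preceding e in T, or global_{q0}(a) if there is none. Consequently, if a read Read(p,a,v) in a trace reads its value from a write performed by a different processor, then some propagate to p occurs strictly between that write and the read in the trace. -/
namespace TSOLB

variable {P A V : Type}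

section Aux

variable [DecidableEq P] [DecidableEq A]

lemma src_lt_length {T : List (Act P A V)} {p : P} {a : A} {k : ℕ}
    (h : Src T p a k) : k < T.length := by
  rcases h with ⟨v, hv⟩ | hv
  · exact (List.getElem?_eq_some_iff.mp hv).1
  · exact (List.getElem?_eq_some_iff.mp hv).1

lemma src_shift (l : Act P A V) (T : List (Act P A V)) (p : P) (a : A) (k : ℕ) :
    Src (l :: T) p a (k + 1) ↔ Src T p a k := by
  simp [Src]

lemma writeTo_shift (l : Act P A V) (T : List (Act P A V)) (a : A) (k : ℕ) :
    WriteTo (l :: T) a (k + 1) ↔ WriteTo T a k := by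
  simp [WriteTo]

lemma lsb_shift (l : Act P A V) (T : List (Act P A V)) (p : P) (a : A) (e n : ℕ) :
    LatestSrcBefore (l :: T) p a (e + 1) (n + 1) ↔ LatestSrcBefore T p a e n := by
  constructor
  · rintro ⟨h1, h2, h3⟩
    exact ⟨by omega, (src_shift ..).mp h2,
      fun k hk1 hk2 hs => h3 (k + 1) (by omega) (by omega) ((src_shift ..).mpr hs)⟩
  · rintro ⟨h1, h2, h3⟩
    refine ⟨by omega, (src_shift ..).mpr h2, fun k hk1 hk2 hs => ?_⟩
    obtain ⟨k', rfl⟩ : ∃ k', k = k' + 1 := ⟨k - 1, by omega⟩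
    exact h3 k' (by omega) (by omega) ((src_shift ..).mp hs)

lemma lwb_shift (l : Act P A V) (T : List (Act P A V)) (a : A) (w e : ℕ) :
    LatestWriteBefore (l :: T) a (w + 1) (e + 1) ↔ LatestWriteBefore T a w e := by
  constructor
  · rintro ⟨h1, h2, h3⟩
    exact ⟨by omega, (writeTo_shift ..).mp h2,
      fun k hk1 hk2 hs => h3 (k + 1) (by omega) (by omega) ((writeTo_shift ..).mpr hs)⟩
  · rintro ⟨h1, h2, h3⟩
    refine ⟨by omega, (writeTo_shift ..).mpr h2, fun k hk1 hk2 hs => ?_⟩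
    obtain ⟨k', rfl⟩ : ∃ k', k = k' + 1 := ⟨k - 1, by omega⟩
    exact h3 k' (by omega) (by omega) ((writeTo_shift ..).mp hs)

lemma loc_inv {q0 q : State P A V} {T : List (Act P A V)} (h : Path q0 T q)
    (p : P) (a : A) :
    ((∀ k : ℕ, ¬ Src T p a k) → q.loc p a = q0.loc p a) ∧
    (∀ (e : ℕ) (v : V), LatestSrcBefore T p a e T.length →
        T[e]? = some (Act.write p a v) → q.loc p a = v) ∧
    (∀ e : ℕ, LatestSrcBefore T p a e T.length →
        T[e]? = some (Act.prop p) →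
      ((∀ k, k < e → ¬ WriteTo T a k) → q.loc p a = q0.glob a) ∧
      (∀ (w : ℕ) (p' : P) (v : V), LatestWriteBefore T a w e →
          T[w]? = some (Act.write p' a v) → q.loc p a = v)) := by
  induction h with
  | nil q =>
    exact ⟨fun _ => rfl,
      fun e v he _ => absurd he.1 (by simp),
      fun e he _ => absurd he.1 (by simp)⟩
  | cons hs hp ih =>
    cases hs with
    | read p0 a0 v0 h0 =>
      refine ⟨?_, ?_, ?_⟩
      · intro hns
        exact ih.1 fun k hk => hns (k + 1) ((src_shift ..).mpr hk)
      · rintro (_ | e) v he hv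
        · simp at hv
        · exact ih.2.1 e v ((lsb_shift ..).mp (by simpa using he)) (by simpa using hv)
      · rintro (_ | e) he hv
        · simp at hv
        · have he' := (lsb_shift ..).mp (by simpa using he)
          rw [List.getElem?_cons_succ] at hv
          refine ⟨fun hnw => (ih.2.2 e he' hv).1 fun k hk hwk =>
              hnw (k + 1) (by omega) ((writeTo_shift ..).mpr hwk), ?_⟩
          rintro (_ | w) p' v hw hwv
          · simp at hwv
          · exact (ih.2.2 e he' hv).2 w p' v ((lwb_shift ..).mp hw) (by simpa using hwv)
    | write p0 a0 v0 =>
      refine ⟨?_, ?_, ?_⟩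
      · intro hns
        rw [ih.1 fun k hk => hns (k + 1) ((src_shift ..).mpr hk)]
        rcases eq_or_ne p0 p with rfl | hpp
        · have ha : a0 ≠ a := fun h => hns 0 (Or.inl ⟨v0, by simp [h]⟩)
          simp [Function.update_apply, Ne.symm ha]
        · simp [Function.update_apply, Ne.symm hpp]
      · rintro (_ | e) v he hv
        · obtain ⟨rfl, rfl, rfl⟩ : p0 = p ∧ a0 = a ∧ v0 = v := by
            simpa [Act.write.injEq] using hv
          rw [ih.1 fun k hk =>
            he.2.2 (k + 1) (by omega)
              (by simpa using Nat.succ_lt_succ (src_lt_length hk))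
              ((src_shift ..).mpr hk)]
          simp [Function.update_apply]
        · exact ih.2.1 e v ((lsb_shift ..).mp (by simpa using he)) (by simpa using hv)
      · rintro (_ | e) he hv
        · simp at hv
        · have he' := (lsb_shift ..).mp (by simpa using he)
          rw [List.getElem?_cons_succ] at hv
          constructor
          · intro hnw
            have ha : a0 ≠ a := fun h => hnw 0 (by omega) ⟨p0, v0, by simp [h]⟩
            rw [(ih.2.2 e he' hv).1 fun k hk hwk =>
              hnw (k + 1) (by omega) ((writeTo_shift ..).mpr hwk)]
            simp [Function.update_apply, Ne.symm ha]
          · rintro (_ | w) p' v hw hwv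
            · obtain ⟨rfl, rfl, rfl⟩ : p0 = p' ∧ a0 = a ∧ v0 = v := by
                simpa [Act.write.injEq] using hwv
              rw [(ih.2.2 e he' hv).1 fun k hk hwk =>
                hw.2.2 (k + 1) (by omega) (by omega) ((writeTo_shift ..).mpr hwk)]
              simp [Function.update_apply]
            · exact (ih.2.2 e he' hv).2 w p' v ((lwb_shift ..).mp hw)
                (by simpa using hwv)
    | prop p0 =>
      refine ⟨?_, ?_, ?_⟩
      · intro hns
        have hpp : p0 ≠ p := fun h => hns 0 (Or.inr (by simp [h]))
        rw [ih.1 fun k hk => hns (k + 1) ((src_shift ..).mpr hk)]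
        simp [Function.update_apply, Ne.symm hpp]
      · rintro (_ | e) v he hv
        · simp at hv
        · exact ih.2.1 e v ((lsb_shift ..).mp (by simpa using he)) (by simpa using hv)
      · rintro (_ | e) he hv
        · obtain rfl : p0 = p := by simpa using hv
          have hloc := ih.1 fun k hk =>
            he.2.2 (k + 1) (by omega)
              (by simpa using Nat.succ_lt_succ (src_lt_length hk))
              ((src_shift ..).mpr hk)
          refine ⟨fun _ => ?_, fun w p' v hw _ => absurd hw.1 (by omega)⟩
          rw [hloc]
          simp [Function.update_apply]
        · have he' := (lsb_shift ..).mp (by simpa using he)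
          rw [List.getElem?_cons_succ] at hv
          constructor
          · intro hnw
            exact (ih.2.2 e he' hv).1 fun k hk hwk =>
              hnw (k + 1) (by omega) ((writeTo_shift ..).mpr hwk)
          · rintro (_ | w) p' v hw hwv
            · simp at hwv
            · exact (ih.2.2 e he' hv).2 w p' v ((lwb_shift ..).mp hw)
                (by simpa using hwv)

end Aux

/-- Local buffer invariant of TSO-LB, and its consequence.  For any
path from an initial state `q0` to a state `q` with trace `T`, any processor `p`
and address `a`: if no event of `T` is a write by `p` to `a` or a propagate to `p`,
then `local_q(p)(a) = global_{q0}(a)`; if the latest such event is `Write(p,a,v)`,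
then `local_q(p)(a) = v`; and if the latest such event is a propagate to `p`, then
`local_q(p)(a)` equals the value of the latest write to `a` preceding it in `T`, or
`global_{q0}(a)` if there is none.  Consequently, in any trace, if a read
`Read(p,a,v)` reads its value from a write performed by a different processor, then
some propagate to `p` occurs strictly between that write and the read. -/
theorem tsolb_local_buffer_invariant
    (P A V : Type) [Fintype P] [Fintype A] [Fintype V] [DecidableEq P] [DecidableEq A] :
    (∀ (q0 q : State P A V) (T : List (Act P A V)),
      Init q0 → Path q0 T q → ∀ (p : P) (a : A),
        ((∀ k : ℕ, ¬ Src T p a k) → q.loc p a = q0.glob a) ∧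
        (∀ (e : ℕ) (v : V), LatestSrcBefore T p a e T.length →
            T[e]? = some (Act.write p a v) → q.loc p a = v) ∧
        (∀ e : ℕ, LatestSrcBefore T p a e T.length →
            T[e]? = some (Act.prop p) →
          ((∀ k, k < e → ¬ WriteTo T a k) → q.loc p a = q0.glob a) ∧
          (∀ (w : ℕ) (p' : P) (v : V), LatestWriteBefore T a w e →
              T[w]? = some (Act.write p' a v) → q.loc p a = v))) ∧
    (∀ (T : List (Act P A V)), IsTrace T →
      ∀ (w r : ℕ) (p pw : P) (a : A) (v : V),
        T[r]? = some (Act.read p a v) → T[w]? = some (Act.write pw a v) →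
        ReadsFrom T w r → pw ≠ p →
        ∃ k, w < k ∧ k < r ∧ T[k]? = some (Act.prop p)) := by
  constructor
  · intro q0 q T hinit hpath p a
    have H := loc_inv hpath p a
    exact ⟨fun h => (H.1 h).trans (hinit p a), H.2.1, H.2.2⟩
  · intro T _ w r p pw a v hr hw hrf hpw
    obtain ⟨q, a', v', hr', ⟨p1, hw1⟩, e, he, hcase⟩ := hrf
    rw [hr] at hr'
    obtain ⟨rfl, rfl, rfl⟩ : p = q ∧ a = a' ∧ v = v' := by
      simpa [Act.read.injEq] using hr'
    rcases hcase with rfl | ⟨hprop, hlwb⟩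
    · rcases he.2.1 with ⟨v2, hv2⟩ | hv2
      · rw [hw] at hv2
        obtain ⟨rfl, -, -⟩ : pw = p ∧ a = a ∧ v = v2 := by
          simpa [Act.write.injEq] using hv2
        exact absurd rfl hpw
      · rw [hw] at hv2
        simp at hv2
    · exact ⟨e, hlwb.1, he.1, hprop⟩

end TSOLB
end
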